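/- Let G = S₃ with irreducible representations φ₁ (trivial), φ₂ (sign), φ₃ (2-dimensional), and y_i := det(Σ_{h∈G} φ_i(h)x_h). Then for any monomial y₁^{α₁}y₂^{α₂}y₃^{α₃} with α ∈ (ℤ_{≥0})³: D_{(123)}(y₁^{α₁}y₂^{α₂}y₃^{α₃}) = (α₁+α₂−α₃)·y₁^{α₁}y₂^{α₂}y₃^{α₃} and D_{(12)}(y₁^{α₁}y₂^{α₂}y₃^{α₃}) = (α₁−α₂)·y₁^{α₁}y₂^{α₂}y₃^{α₃}. -/

import Mathlib

/-!
`D_g` is the derivation `∑_h x_{g⁻¹h} ∂/∂x_h`, so on monomials in the `y_i` it acts through the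
logarithmic derivatives `D_g y_i / y_i`, which add up with the exponents `α_i`. A linear form
`∑_h a(h) x_h` is sent to `∑_h a(gh) x_h`; hence `D_g y = χ(g) y` for `y = ∑_h χ(h) x_h` with `χ` a
character, and `D_g X = φ(g) X` for the matrix `X = ∑_h φ(h) x_h`. By Jacobi's formula for
derivations the latter gives `D_g det X = tr φ(g) · det X`.
-/

open MvPolynomial Equiv

/-- The Frobenius differential operator `D_g f = ∑_{h ∈ G} x_{g⁻¹ h} ∂f/∂x_h`. -/
noncomputable def Dop {G : Type*} [Group G] [Fintype G] [DecidableEq G] (g : G)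
    (f : MvPolynomial G ℂ) : MvPolynomial G ℂ :=
  ∑ h : G, X (g⁻¹ * h) * pderiv h f

/-- The matrix `X = ∑_{h ∈ G} φ(h) x_h` with entries in the polynomial ring. -/
noncomputable def repMatrix {G : Type*} [Group G] [Fintype G] [DecidableEq G] {d : ℕ}
    (φ : G →* Matrix (Fin d) (Fin d) ℂ) : Matrix (Fin d) (Fin d) (MvPolynomial G ℂ) :=
  ∑ h : G, (X h : MvPolynomial G ℂ) • (φ h).map C

namespace Derivation

variable {R A : Type*} [CommSemiring R] [CommRing A] [Algebra R A] (D : Derivation R A A)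

theorem leibniz_prod {ι : Type*} [DecidableEq ι] (s : Finset ι) (f : ι → A) :
    D (∏ i ∈ s, f i) = ∑ i ∈ s, ∏ j ∈ s, Function.update f i (D (f i)) j := by
  induction s using Finset.induction_on with
  | empty => simp
  | insert a s has ih =>
    rw [Finset.prod_insert has, leibniz, ih, Finset.sum_insert has, smul_eq_mul, smul_eq_mul,
      Finset.mul_sum, Finset.prod_insert has, Function.update_self, add_comm]
    congr 1
    · rw [Finset.prod_congr rfl fun j hj => Function.update_of_ne (ne_of_mem_of_not_mem hj has) _ _]
      ring
    · refine Finset.sum_congr rfl fun i hi => ?_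
      rw [Finset.prod_insert has, Function.update_of_ne (ne_of_mem_of_not_mem hi has).symm]

variable {n : Type*} [Fintype n] [DecidableEq n]

theorem map_det_eq_sum_det_updateCol (M : Matrix n n A) :
    D M.det = ∑ j, (M.updateCol j fun i => D (M i j)).det := by
  simp only [Matrix.det_apply, map_sum, map_zsmul_unit, leibniz_prod]
  rw [Finset.sum_comm]
  refine Finset.sum_congr rfl fun σ _ => ?_
  rw [← Finset.smul_sum]
  congr 1
  refine Finset.sum_congr rfl fun j _ => Finset.prod_congr rfl fun k _ => ?_
  rcases eq_or_ne k j with rfl | hkj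
  · simp
  · simp [Function.update_of_ne hkj, Matrix.updateCol_ne hkj]

theorem map_det_of_map_eq_mul {M B : Matrix n n A} (h : M.map D = B * M) :
    D M.det = B.trace * M.det := by
  have hcol (j : n) :
      (fun i => D (M.transpose i j)) = fun i => ∑ k, B j k • M.transpose i k := by
    ext i
    simpa [Matrix.mul_apply, mul_comm] using congrFun (congrFun h j) i
  rw [← Matrix.det_transpose, map_det_eq_sum_det_updateCol, Matrix.trace, Finset.sum_mul]
  refine Finset.sum_congr rfl fun j _ => ?_
  rw [hcol, Matrix.det_updateCol_sum, smul_eq_mul, Matrix.det_transpose, Matrix.diag_apply]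

variable {D}

theorem map_mul_of_eq_mul {a b u v : A} (ha : D a = u * a) (hb : D b = v * b) :
    D (a * b) = (u + v) * (a * b) := by
  rw [leibniz, ha, hb, smul_eq_mul, smul_eq_mul]
  ring

theorem map_pow_of_eq_mul {a u : A} (ha : D a = u * a) (k : ℕ) :
    D (a ^ k) = (k * u) * a ^ k := by
  induction k with
  | zero => simp
  | succ k ih =>
    rw [pow_succ, map_mul_of_eq_mul ih ha]
    push_cast
    ring

end Derivation

section Dop

variable {G : Type*} [Group G] [Fintype G] [DecidableEq G]

noncomputable def dopDerivation (g : G) : Derivation ℂ (MvPolynomial G ℂ) (MvPolynomial G ℂ) :=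
  ∑ h : G, (X (g⁻¹ * h) : MvPolynomial G ℂ) • pderiv h

theorem coe_dopDerivation (g : G) : ⇑(dopDerivation g) = Dop g := by
  ext1 f
  simp only [dopDerivation, Dop, ← Derivation.coeFnAddMonoidHom_apply, map_sum, Finset.sum_apply]
  simp [Derivation.coeFnAddMonoidHom_apply, Derivation.smul_apply]

theorem Dop_X (g h : G) : Dop g (X h) = X (g⁻¹ * h) := by
  simp [Dop, pderiv_X, Pi.single_apply]

theorem Dop_sum_C_mul_X (g : G) (a : G → ℂ) :
    Dop g (∑ h, C (a h) * X h) = ∑ h, C (a (g * h)) * X h := by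
  rw [← coe_dopDerivation, map_sum]
  simp only [C_mul', Derivation.map_smul]
  simp only [coe_dopDerivation, Dop_X]
  exact Fintype.sum_equiv (Equiv.mulLeft g⁻¹) _ _ fun h => by simp

theorem Dop_sum_character_mul_X (χ : G →* ℂ) (g : G) :
    Dop g (∑ h, C (χ h) * X h) = C (χ g) * ∑ h, C (χ h) * X h := by
  simp only [Dop_sum_C_mul_X, map_mul, Finset.mul_sum, mul_assoc]

theorem repMatrix_apply {d : ℕ} (φ : G →* Matrix (Fin d) (Fin d) ℂ) (i j : Fin d) :
    repMatrix φ i j = ∑ h, C (φ h i j) * X h := by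
  simp [repMatrix, Matrix.sum_apply, mul_comm]

theorem repMatrix_map_Dop {d : ℕ} (φ : G →* Matrix (Fin d) (Fin d) ℂ) (g : G) :
    (repMatrix φ).map (Dop g) = (φ g).map C * repMatrix φ := by
  ext i j
  simp only [Matrix.map_apply, repMatrix_apply, Dop_sum_C_mul_X, map_mul, Matrix.mul_apply,
    map_sum, Finset.sum_mul, Finset.mul_sum]
  rw [Finset.sum_comm]
  simp [mul_assoc]

theorem Dop_det_repMatrix {d : ℕ} (φ : G →* Matrix (Fin d) (Fin d) ℂ) (g : G) :
    Dop g (repMatrix φ).det = C (φ g).trace * (repMatrix φ).det := by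
  rw [← coe_dopDerivation, Derivation.map_det_of_map_eq_mul (B := (φ g).map C)]
  · rw [← AddMonoidHom.map_trace]
  · rw [coe_dopDerivation, repMatrix_map_Dop]

theorem Dop_pow_mul_pow_mul_pow {g : G} {f₁ f₂ f₃ : MvPolynomial G ℂ} {c₁ c₂ c₃ : ℂ}
    (h₁ : Dop g f₁ = C c₁ * f₁) (h₂ : Dop g f₂ = C c₂ * f₂) (h₃ : Dop g f₃ = C c₃ * f₃)
    (a b c : ℕ) :
    Dop g (f₁ ^ a * f₂ ^ b * f₃ ^ c) =
      C (a * c₁ + b * c₂ + c * c₃) * (f₁ ^ a * f₂ ^ b * f₃ ^ c) := by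
  rw [← coe_dopDerivation] at *
  rw [Derivation.map_mul_of_eq_mul (Derivation.map_mul_of_eq_mul
    (Derivation.map_pow_of_eq_mul h₁ a) (Derivation.map_pow_of_eq_mul h₂ b))
    (Derivation.map_pow_of_eq_mul h₃ c)]
  simp only [map_add, map_mul, map_natCast]

end Dop

/-- For `G = S₃`, the actions of `D_{(123)}` and `D_{(12)}` on a monomial
`y₁^{α₁} y₂^{α₂} y₃^{α₃}` are by the scalars `α₁ + α₂ - α₃` and `α₁ - α₂`. -/
theorem Dop_monomial_S3
    (φ₃ : Perm (Fin 3) →* Matrix (Fin 2) (Fin 2) ℂ)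
    (hc : (φ₃ (swap 0 2 * swap 0 1)).trace = -1)
    (ht : (φ₃ (swap 0 1)).trace = 0)
    (y₁ y₂ y₃ : MvPolynomial (Perm (Fin 3)) ℂ)
    (hy₁ : y₁ = ∑ h : Perm (Fin 3), X h)
    (hy₂ : y₂ = ∑ h : Perm (Fin 3), C (((Perm.sign h : ℤ) : ℂ)) * X h)
    (hy₃ : y₃ = (repMatrix φ₃).det)
    (α₁ α₂ α₃ : ℕ) :
    Dop (swap 0 2 * swap 0 1) (y₁ ^ α₁ * y₂ ^ α₂ * y₃ ^ α₃) =
        C ((α₁ : ℂ) + α₂ - α₃) * (y₁ ^ α₁ * y₂ ^ α₂ * y₃ ^ α₃) ∧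
      Dop (swap 0 1) (y₁ ^ α₁ * y₂ ^ α₂ * y₃ ^ α₃) =
        C ((α₁ : ℂ) - α₂) * (y₁ ^ α₁ * y₂ ^ α₂ * y₃ ^ α₃) := by
  let sign : Perm (Fin 3) →* ℂ :=
    (Int.castRingHom ℂ : ℤ →* ℂ).comp ((Units.coeHom ℤ).comp Perm.sign)
  have hD₁ (g) : Dop g y₁ = C 1 * y₁ := by simpa [hy₁] using Dop_sum_character_mul_X 1 g
  have hD₂ (g) : Dop g y₂ = C (sign g) * y₂ := hy₂ ▸ Dop_sum_character_mul_X sign g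
  have hD₃ (g) : Dop g y₃ = C (φ₃ g).trace * y₃ := hy₃ ▸ Dop_det_repMatrix φ₃ g
  have hsign_c : sign (swap 0 2 * swap 0 1) = 1 := by simp [sign]
  have hsign_t : sign (swap 0 1) = -1 := by simp [sign]
  constructor
  · rw [Dop_pow_mul_pow_mul_pow (hD₁ _) (hD₂ _) (hD₃ _) α₁ α₂ α₃, hsign_c, hc]
    congr 2
    ring
  · rw [Dop_pow_mul_pow_mul_pow (hD₁ _) (hD₂ _) (hD₃ _) α₁ α₂ α₃, hsign_t, ht]
    congr 2
    ring
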